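/- Let X = ℝⁿ × Lᵖ((0,∞), ℝⁿ) with 1 ≤ p < ∞, and define A(0, φ) = (−φ(0), −φ′) with domain D(A) = {0} × W^{1,p}((0,∞), ℝⁿ). For each γ > 0 and each λ > −γ, λ belongs to the resolvent set of A − γB (where B(0,φ) = (0,φ)), and the resolvent is given explicitly by (λI − (A − γB))^{−1}(α, ψ) = (0, φ) with φ(a) = e^{−(λ+γ)a} α + ∫₀ᵃ e^{−(λ+γ)(a−l)} ψ(l) dl for almost every a ≥ 0. -/

import Mathlib

open MeasureTheory Filter Set
open scoped Topology ENNReal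

lemma exp_hasDerivAt (m x : ℝ) (hm : m ≠ 0) :
    HasDerivAt (fun y : ℝ => -Real.exp (-(m * y)) / m) (Real.exp (-(m * x))) x := by
  have h1 : HasDerivAt (fun y : ℝ => -(m * y)) (-m) x := by
    simpa using (hasDerivAt_id x).const_mul (-m)
  have h2 := ((Real.hasDerivAt_exp (-(m * x))).comp x h1).neg.div_const m
  exact h2.congr_deriv (by field_simp)

lemma exp_intervalIntegral (m s a : ℝ) (hm : m ≠ 0) :
    ∫ l in s..a, Real.exp (-(m * l)) = (Real.exp (-(m * s)) - Real.exp (-(m * a))) / m := by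
  rw [intervalIntegral.integral_eq_sub_of_hasDerivAt (fun x _ => exp_hasDerivAt m x hm)
      ((Real.continuous_exp.comp (by continuity)).intervalIntegrable s a)]
  ring


variable {E : Type*} [NormedAddCommGroup E] [NormedSpace ℝ E] [CompleteSpace E]

lemma fubini_triangle (m a : ℝ) (hm : 0 ≤ m) (ha : 0 ≤ a) {g : ℝ → E}
    (hg : IntegrableOn g (Ioc 0 a)) :
    ∫ l in Ioc (0:ℝ) a, Real.exp (-(m * l)) • (∫ s in Ioc (0:ℝ) l, g s)
      = ∫ s in Ioc (0:ℝ) a, (∫ l in Ioc s a, Real.exp (-(m * l))) • g s := by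
  set ν := volume.restrict (Ioc (0:ℝ) a) with hν
  haveI : IsFiniteMeasure ν := by
    constructor
    rw [hν, Measure.restrict_apply_univ, Real.volume_Ioc]
    exact ENNReal.ofReal_lt_top
  set T : ℝ → ℝ → E := fun l s => if s ≤ l then Real.exp (-(m * l)) • g s else 0 with hT
  have hTind : Function.uncurry T =
      ({z : ℝ × ℝ | z.2 ≤ z.1}).indicator (fun z => Real.exp (-(m * z.1)) • g z.2) := by
    funext z
    by_cases h : z.2 ≤ z.1 <;> simp [hT, Function.uncurry, Set.indicator_apply, h]
  have hmeasS : MeasurableSet {z : ℝ × ℝ | z.2 ≤ z.1} :=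
    measurableSet_le measurable_snd measurable_fst
  have h1 : AEStronglyMeasurable (fun z : ℝ × ℝ => Real.exp (-(m * z.1)) • g z.2) (ν.prod ν) :=
    ((Real.continuous_exp.comp ((continuous_const.mul continuous_fst).neg : Continuous fun z : ℝ×ℝ => -(m * z.1))).aestronglyMeasurable).smul
      hg.aestronglyMeasurable.comp_snd
  have hTm : AEStronglyMeasurable (Function.uncurry T) (ν.prod ν) := by
    rw [hTind]; exact h1.indicator hmeasS
  have hdom : Integrable (fun z : ℝ × ℝ => ‖g z.2‖) (ν.prod ν) := by
    refine (integrable_prod_iff hg.norm.aestronglyMeasurable.comp_snd).2 ⟨?_, ?_⟩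
    · exact ae_of_all _ fun x => hg.norm
    · simpa using integrable_const (μ := ν) (∫ y, ‖g y‖ ∂ν)
  have hprodres : ν.prod ν = (volume.prod volume).restrict (Ioc (0:ℝ) a ×ˢ Ioc (0:ℝ) a) := by
    rw [hν, Measure.prod_restrict]
  have haemem : ∀ᵐ z : ℝ × ℝ ∂ν.prod ν, z ∈ Ioc (0:ℝ) a ×ˢ Ioc (0:ℝ) a := by
    rw [hprodres]
    exact ae_restrict_mem (measurableSet_Ioc.prod measurableSet_Ioc)
  have hTi : Integrable (Function.uncurry T) (ν.prod ν) := by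
    refine hdom.mono' hTm ?_
    filter_upwards [haemem] with z hz
    rcases hz with ⟨hz1, _⟩
    by_cases h : z.2 ≤ z.1
    · simp only [Function.uncurry, hT, if_pos h, norm_smul, Real.norm_eq_abs,
        abs_of_pos (Real.exp_pos _)]
      have : Real.exp (-(m * z.1)) ≤ 1 := by
        rw [Real.exp_le_one_iff]
        have := mul_nonneg hm hz1.1.le
        linarith
      nlinarith [norm_nonneg (g z.2), Real.exp_pos (-(m * z.1))]
    · simp [Function.uncurry, hT, if_neg h]
  have swap := integral_integral_swap hTi
  have hL : ∀ l ∈ Ioc (0:ℝ) a,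
      (∫ s, T l s ∂ν) = Real.exp (-(m * l)) • (∫ s in Ioc (0:ℝ) l, g s) := by
    intro l hl
    have : (fun s => T l s) = (Iic l).indicator (fun s => Real.exp (-(m * l)) • g s) := by
      funext s
      by_cases h : s ≤ l <;> simp [hT, Set.indicator_apply, h]
    rw [this, integral_indicator measurableSet_Iic, hν, Measure.restrict_restrict measurableSet_Iic]
    have hset : Iic l ∩ Ioc 0 a = Ioc (0:ℝ) l := by
      ext x
      simp only [mem_inter_iff, mem_Iic, mem_Ioc]
      exact ⟨fun ⟨h1, h2, h3⟩ => ⟨h2, h1⟩, fun ⟨h1, h2⟩ => ⟨h2, h1, h2.trans hl.2⟩⟩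
    rw [hset, integral_smul]
  have hR : ∀ s ∈ Ioc (0:ℝ) a,
      (∫ l, T l s ∂ν) = (∫ l in Ioc s a, Real.exp (-(m * l))) • g s := by
    intro s hs
    have : (fun l => T l s) = (Ici s).indicator (fun l => Real.exp (-(m * l)) • g s) := by
      funext l
      by_cases h : s ≤ l <;> simp [hT, Set.indicator_apply, h]
    rw [this, integral_indicator measurableSet_Ici, hν, Measure.restrict_restrict measurableSet_Ici]
    have hset : Ici s ∩ Ioc 0 a = Icc s a := by
      ext x
      simp only [mem_inter_iff, mem_Ici, mem_Ioc, mem_Icc]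
      exact ⟨fun ⟨h1, _, h3⟩ => ⟨h1, h3⟩, fun ⟨h1, h2⟩ => ⟨h1, lt_of_lt_of_le hs.1 h1, h2⟩⟩
    rw [hset, integral_smul_const, MeasureTheory.integral_Icc_eq_integral_Ioc]
  calc ∫ l in Ioc (0:ℝ) a, Real.exp (-(m * l)) • (∫ s in Ioc (0:ℝ) l, g s)
      = ∫ l, (∫ s, T l s ∂ν) ∂ν := by
        rw [hν]
        exact (setIntegral_congr_fun measurableSet_Ioc fun l hl => (hL l hl).symm)
    _ = ∫ s, (∫ l, T l s ∂ν) ∂ν := swap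
    _ = ∫ s in Ioc (0:ℝ) a, (∫ l in Ioc s a, Real.exp (-(m * l))) • g s := by
        rw [hν]
        exact setIntegral_congr_fun measurableSet_Ioc hR


lemma exp_affine_hasDerivAt (c b x : ℝ) (hc : c ≠ 0) :
    HasDerivAt (fun y : ℝ => Real.exp (c * y + b) / c) (Real.exp (c * x + b)) x := by
  have h1 : HasDerivAt (fun y : ℝ => c * y + b) c x := by
    simpa using ((hasDerivAt_id x).const_mul c).add_const b
  have h2 := ((Real.hasDerivAt_exp (c * x + b)).comp x h1).div_const c
  exact h2.congr_deriv (by field_simp)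

lemma lint_w_le (m : ℝ) (hm : 0 < m) (a : ℝ) :
    ∫⁻ l in Ioc (0:ℝ) a, ENNReal.ofReal (Real.exp (-(m * (a - l)))) ≤ ENNReal.ofReal (1/m) := by
  rcases le_or_gt a 0 with h|h
  · rw [Ioc_eq_empty (by simpa using h)]
    simp
  · have hint : IntegrableOn (fun l => Real.exp (-(m * (a - l)))) (Ioc 0 a) :=
      (Real.continuous_exp.comp (by continuity)).integrableOn_Ioc
    rw [← ofReal_integral_eq_lintegral_ofReal hint (ae_of_all _ fun x => (Real.exp_pos _).le)]
    apply ENNReal.ofReal_le_ofReal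
    rw [← intervalIntegral.integral_of_le h.le]
    have hcong : ∀ l ∈ uIcc (0:ℝ) a, Real.exp (-(m * (a - l))) = Real.exp (m * l + -(m*a)) :=
      fun l _ => by rw [show -(m*(a-l)) = m*l + -(m*a) by ring]
    rw [intervalIntegral.integral_congr hcong,
      intervalIntegral.integral_eq_sub_of_hasDerivAt
        (fun x _ => exp_affine_hasDerivAt m (-(m*a)) x hm.ne')
        ((Real.continuous_exp.comp (by continuity)).intervalIntegrable _ _)]
    have h1 : m * a + -(m*a) = 0 := by ring
    rw [h1, Real.exp_zero]
    have h2 := (Real.exp_pos (m * 0 + -(m*a))).le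
    have h3 : 0 < 1/m := by positivity
    have := div_nonneg h2 hm.le
    linarith

lemma lint_exp_Ici (m l : ℝ) (hm : 0 < m) :
    ∫⁻ a in Ici l, ENNReal.ofReal (Real.exp (-(m * (a - l)))) = ENNReal.ofReal (1/m) := by
  rw [← MeasureTheory.setLIntegral_congr (Ioi_ae_eq_Ici (a := l))]
  have hfun : (fun a => Real.exp (-(m * (a - l)))) = fun a => Real.exp (m*l) * Real.exp (-m * a) := by
    funext x; rw [← Real.exp_add]; congr 1; ring
  have hint : IntegrableOn (fun a => Real.exp (-(m * (a - l)))) (Ioi l) := by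
    rw [hfun]; exact (exp_neg_integrableOn_Ioi l hm).const_mul _
  rw [← ofReal_integral_eq_lintegral_ofReal hint (ae_of_all _ fun x => (Real.exp_pos _).le)]
  congr 1
  have hform : ∀ x : ℝ, Real.exp (-(m*(x-l))) = Real.exp (-m*x + m*l) :=
    fun x => by rw [show -(m*(x-l)) = -m*x + m*l by ring]
  have hderiv : ∀ x ∈ Ici l, HasDerivAt (fun y => Real.exp (-m * y + m*l) / (-m))
      (Real.exp (-(m * (x - l)))) x := by
    intro x _
    rw [hform]
    exact exp_affine_hasDerivAt (-m) (m*l) x (neg_ne_zero.2 hm.ne')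
  have htends : Tendsto (fun y => Real.exp (-m * y + m*l) / (-m)) atTop (𝓝 0) := by
    have h1 : Tendsto (fun y : ℝ => m * y) atTop atTop :=
      Tendsto.const_mul_atTop hm tendsto_id
    have h2 : Tendsto (fun y : ℝ => -m * y) atTop atBot :=
      (tendsto_neg_atTop_atBot.comp h1).congr (fun y => by simp [neg_mul])
    have h3 : Tendsto (fun y : ℝ => -m * y + m*l) atTop atBot :=
      tendsto_atBot_add_const_right _ _ h2
    have h4 := (Real.tendsto_exp_atBot.comp h3).div_const (-m)
    simpa using h4
  rw [integral_Ioi_of_hasDerivAt_of_tendsto' hderiv hint htends]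
  rw [show -m * l + m * l = 0 by ring, Real.exp_zero]
  field_simp
  ring

lemma exp_rpow' (u y : ℝ) : (Real.exp u) ^ y = Real.exp (u * y) := by
  rw [Real.rpow_def_of_pos (Real.exp_pos u), Real.log_exp]

lemma holder_step (m q a : ℝ) (hm : 0 < m) (hq : 1 ≤ q) {f : ℝ → ℝ≥0∞} (hf : Measurable f) :
    (∫⁻ l in Ioc (0:ℝ) a, ENNReal.ofReal (Real.exp (-(m * (a - l)))) * f l) ^ q
      ≤ ENNReal.ofReal (1/m) ^ (q-1)
        * ∫⁻ l in Ioc (0:ℝ) a, ENNReal.ofReal (Real.exp (-(m * (a - l)))) * f l ^ q := by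
  have hq0 : (0:ℝ) ≤ q := by linarith
  rcases eq_or_lt_of_le hq with hq1|hq1
  · rw [← hq1]
    simp [ENNReal.rpow_one]
  · set r : ℝ := Real.conjExponent q with hrdef
    have hqr : r.HolderConjugate q := (Real.HolderConjugate.conjExponent hq1).symm
    have hr1 : 1 < r := hqr.lt
    have hr0 : r ≠ 0 := by linarith
    have hq0' : q ≠ 0 := by linarith
    have hinv : 1/r + 1/q = 1 := by
      rw [one_div, one_div]; exact hqr.inv_add_inv_eq_one
    set f₁ : ℝ → ℝ≥0∞ := fun l => ENNReal.ofReal (Real.exp (-(m * (a - l)) / r)) with hf₁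
    set f₂ : ℝ → ℝ≥0∞ := fun l => ENNReal.ofReal (Real.exp (-(m * (a - l)) / q)) * f l with hf₂
    have h1 : AEMeasurable f₁ (volume.restrict (Ioc (0:ℝ) a)) :=
      ((ENNReal.continuous_ofReal.comp (Real.continuous_exp.comp (by continuity))).measurable).aemeasurable
    have h2 : AEMeasurable f₂ (volume.restrict (Ioc (0:ℝ) a)) :=
      (((ENNReal.continuous_ofReal.comp (Real.continuous_exp.comp (by continuity))).measurable).mul hf).aemeasurable
    have hHold := ENNReal.lintegral_mul_le_Lp_mul_Lq (volume.restrict (Ioc (0:ℝ) a)) hqr h1 h2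
    have hsplit : ∀ l : ℝ, f₁ l * f₂ l = ENNReal.ofReal (Real.exp (-(m * (a - l)))) * f l := by
      intro l
      rw [hf₁, hf₂, ← mul_assoc, ← ENNReal.ofReal_mul (Real.exp_pos _).le, ← Real.exp_add]
      congr 3
      have hgoal : -(m*(a-l))/r + -(m*(a-l))/q = -(m*(a-l)) := by
        have h' : -(m*(a-l))/r + -(m*(a-l))/q = -(m*(a-l)) * (1/r + 1/q) := by ring
        rw [h', hinv, mul_one]
      linarith [hgoal]
    have hf₁r : ∀ l : ℝ, f₁ l ^ r = ENNReal.ofReal (Real.exp (-(m * (a - l)))) := by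
      intro l
      rw [hf₁, ENNReal.ofReal_rpow_of_pos (Real.exp_pos _), exp_rpow']
      congr 1
      field_simp
    have hf₂q : ∀ l : ℝ, f₂ l ^ q
        = ENNReal.ofReal (Real.exp (-(m * (a - l)))) * f l ^ q := by
      intro l
      rw [hf₂, ENNReal.mul_rpow_of_nonneg _ _ hq0,
        ENNReal.ofReal_rpow_of_pos (Real.exp_pos _), exp_rpow']
      congr 2
      field_simp
    have hL : (∫⁻ l in Ioc (0:ℝ) a, ENNReal.ofReal (Real.exp (-(m * (a - l)))) * f l)
        ≤ (∫⁻ l in Ioc (0:ℝ) a, ENNReal.ofReal (Real.exp (-(m * (a - l))))) ^ (1/r)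
          * (∫⁻ l in Ioc (0:ℝ) a,
              ENNReal.ofReal (Real.exp (-(m * (a - l)))) * f l ^ q) ^ (1/q) := by
      calc (∫⁻ l in Ioc (0:ℝ) a, ENNReal.ofReal (Real.exp (-(m * (a - l)))) * f l)
          = ∫⁻ l in Ioc (0:ℝ) a, (f₁ * f₂) l := by
            apply lintegral_congr; intro l; exact (hsplit l).symm
        _ ≤ (∫⁻ l in Ioc (0:ℝ) a, f₁ l ^ r) ^ (1/r)
            * (∫⁻ l in Ioc (0:ℝ) a, f₂ l ^ q) ^ (1/q) := hHold
        _ = _ := by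
            congr 1
            · congr 1; apply lintegral_congr; intro l; exact hf₁r l
            · congr 1; apply lintegral_congr; intro l; exact hf₂q l
    have hmono := ENNReal.rpow_le_rpow hL hq0
    refine hmono.trans ?_
    rw [ENNReal.mul_rpow_of_nonneg _ _ hq0, ← ENNReal.rpow_mul, ← ENNReal.rpow_mul]
    have e1 : 1/r * q = q - 1 := by
      have : 1/r = 1 - 1/q := by linarith
      rw [this]
      field_simp
    have e2 : 1/q * q = 1 := by field_simp
    rw [e1, e2, ENNReal.rpow_one]
    exact mul_le_mul' (ENNReal.rpow_le_rpow (lint_w_le m hm a) (by linarith)) le_rfl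

lemma tonelli_step (m q : ℝ) (hm : 0 < m) {f : ℝ → ℝ≥0∞} (hf : Measurable f) :
    ∫⁻ a in Ioi (0:ℝ), ∫⁻ l in Ioc (0:ℝ) a, ENNReal.ofReal (Real.exp (-(m * (a - l)))) * f l ^ q
      ≤ ENNReal.ofReal (1/m) * ∫⁻ l in Ioi (0:ℝ), f l ^ q := by
  set H : ℝ → ℝ → ℝ≥0∞ := fun a l =>
    if l ≤ a then ENNReal.ofReal (Real.exp (-(m * (a - l)))) * f l ^ q else 0 with hH
  have hmeasH : Measurable (Function.uncurry H) := by
    apply Measurable.ite (measurableSet_le measurable_snd measurable_fst)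
    · exact ((ENNReal.continuous_ofReal.comp
        (Real.continuous_exp.comp (by continuity))).measurable).mul
        ((ENNReal.continuous_rpow_const.measurable).comp (hf.comp measurable_snd))
    · exact measurable_const
  have hswap := lintegral_lintegral_swap (μ := volume.restrict (Ioi (0:ℝ)))
    (ν := volume.restrict (Ioi (0:ℝ))) hmeasH.aemeasurable
  have hLHS : (∫⁻ a in Ioi (0:ℝ),
        ∫⁻ l in Ioc (0:ℝ) a, ENNReal.ofReal (Real.exp (-(m * (a - l)))) * f l ^ q)
      = ∫⁻ a in Ioi (0:ℝ), ∫⁻ l in Ioi (0:ℝ), H a l := by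
    apply lintegral_congr_ae
    filter_upwards [ae_restrict_mem measurableSet_Ioi] with a _
    have h1 : (fun l => H a l) = (Iic a).indicator
        (fun l => ENNReal.ofReal (Real.exp (-(m * (a - l)))) * f l ^ q) := by
      funext l; by_cases h : l ≤ a <;> simp [hH, indicator_apply, h]
    rw [h1, lintegral_indicator measurableSet_Iic,
      Measure.restrict_restrict measurableSet_Iic]
    have h2 : Iic a ∩ Ioi 0 = Ioc (0:ℝ) a := by
      ext x; simp only [mem_inter_iff, mem_Iic, mem_Ioi, mem_Ioc]; tauto
    rw [h2]
  have hRHS : (∫⁻ l in Ioi (0:ℝ), ∫⁻ a in Ioi (0:ℝ), H a l)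
      = ∫⁻ l in Ioi (0:ℝ), ENNReal.ofReal (1/m) * f l ^ q := by
    apply lintegral_congr_ae
    filter_upwards [ae_restrict_mem measurableSet_Ioi] with l hl
    have h1 : (fun a => H a l) = (Ici l).indicator
        (fun a => ENNReal.ofReal (Real.exp (-(m * (a - l)))) * f l ^ q) := by
      funext a; by_cases h : l ≤ a <;> simp [hH, indicator_apply, h]
    rw [h1, lintegral_indicator measurableSet_Ici,
      Measure.restrict_restrict measurableSet_Ici]
    have h2 : Ici l ∩ Ioi 0 = Ici l := by
      apply inter_eq_left.2
      intro x hx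
      exact lt_of_lt_of_le hl (mem_Ici.mp hx)
    rw [h2, lintegral_mul_const _
      (by fun_prop : Measurable fun a : ℝ => ENNReal.ofReal (Real.exp (-(m * (a - l))))),
      lint_exp_Ici m l hm, mul_comm]
  rw [hLHS, hswap, hRHS, lintegral_const_mul' _ _ ENNReal.ofReal_ne_top]

lemma key_bound (m q : ℝ) (hm : 0 < m) (hq : 1 ≤ q) {f : ℝ → ℝ≥0∞} (hf : Measurable f) :
    ∫⁻ a in Ioi (0:ℝ), (∫⁻ l in Ioc (0:ℝ) a, ENNReal.ofReal (Real.exp (-(m * (a - l)))) * f l) ^ q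
      ≤ ENNReal.ofReal (1/m) ^ q * ∫⁻ l in Ioi (0:ℝ), f l ^ q := by
  have hC0 : ENNReal.ofReal (1/m) ≠ 0 := by
    simp only [ne_eq, ENNReal.ofReal_eq_zero, not_le]
    positivity
  calc ∫⁻ a in Ioi (0:ℝ),
        (∫⁻ l in Ioc (0:ℝ) a, ENNReal.ofReal (Real.exp (-(m * (a - l)))) * f l) ^ q
      ≤ ∫⁻ a in Ioi (0:ℝ), ENNReal.ofReal (1/m) ^ (q-1)
          * ∫⁻ l in Ioc (0:ℝ) a, ENNReal.ofReal (Real.exp (-(m * (a - l)))) * f l ^ q :=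
        lintegral_mono fun a => holder_step m q a hm hq hf
    _ = ENNReal.ofReal (1/m) ^ (q-1) * ∫⁻ a in Ioi (0:ℝ),
          ∫⁻ l in Ioc (0:ℝ) a, ENNReal.ofReal (Real.exp (-(m * (a - l)))) * f l ^ q :=
        lintegral_const_mul' _ _ (ENNReal.rpow_ne_top_of_nonneg (by linarith) ENNReal.ofReal_ne_top)
    _ ≤ ENNReal.ofReal (1/m) ^ (q-1) * (ENNReal.ofReal (1/m) * ∫⁻ l in Ioi (0:ℝ), f l ^ q) :=
        mul_le_mul' le_rfl (tonelli_step m q hm hf)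
    _ = ENNReal.ofReal (1/m) ^ q * ∫⁻ l in Ioi (0:ℝ), f l ^ q := by
        rw [← mul_assoc]
        congr 1
        calc ENNReal.ofReal (1/m) ^ (q-1) * ENNReal.ofReal (1/m)
            = ENNReal.ofReal (1/m) ^ (q-1) * ENNReal.ofReal (1/m) ^ (1:ℝ) := by
              rw [ENNReal.rpow_one]
          _ = ENNReal.ofReal (1/m) ^ ((q-1)+1) :=
              (ENNReal.rpow_add _ _ hC0 ENNReal.ofReal_ne_top).symm
          _ = ENNReal.ofReal (1/m) ^ q := by norm_num

theorem resolvent_general {E : Type*} [NormedAddCommGroup E] [NormedSpace ℝ E] [CompleteSpace E]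
    (p : ℝ≥0∞) (hp1 : 1 ≤ p) (hp2 : p ≠ ⊤)
    (m : ℝ) (hm : 0 < m)
    (α : E) (ψ : ℝ → E)
    (hψ : MemLp ψ p (volume.restrict (Set.Ioi 0)))
    (φ : ℝ → E)
    (hφ : ∀ a : ℝ, φ a = Real.exp (-m * a) • α
        + ∫ l in (0:ℝ)..a, Real.exp (-m * (a - l)) • ψ l) :
    MemLp φ p (volume.restrict (Set.Ioi 0)) ∧
    φ 0 = α ∧
    (∀ a : ℝ, 0 ≤ a → φ a = α + ∫ l in (0:ℝ)..a, (ψ l - m • φ l)) ∧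
    (∀ φ₂ : ℝ → E, ContinuousOn φ₂ (Set.Ici 0) →
      (∀ a : ℝ, 0 ≤ a → φ₂ a = α + ∫ l in (0:ℝ)..a, (ψ l - m • φ₂ l)) →
      ∀ a : ℝ, 0 ≤ a → φ₂ a = φ a) := by
  have hm0 : m ≠ 0 := hm.ne'
  have hexpc : Continuous fun x : ℝ => Real.exp (m * x) :=
    Real.continuous_exp.comp (continuous_const.mul continuous_id)
  have hexpneg : Continuous fun x : ℝ => Real.exp (-(m * x)) :=
    Real.continuous_exp.comp ((continuous_const.mul continuous_id).neg)
  -- local integrability of ψ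
  have hψloc : ∀ a : ℝ, IntegrableOn ψ (Ioc 0 a) := by
    intro a
    have hmono : volume.restrict (Ioc (0:ℝ) a) ≤ volume.restrict (Ioi 0) :=
      Measure.restrict_mono Ioc_subset_Ioi_self le_rfl
    have h1 : MemLp ψ p (volume.restrict (Ioc (0:ℝ) a)) := hψ.mono_measure hmono
    haveI : IsFiniteMeasure (volume.restrict (Ioc (0:ℝ) a)) := by
      constructor
      rw [Measure.restrict_apply_univ, Real.volume_Ioc]
      exact ENNReal.ofReal_lt_top
    exact memLp_one_iff_integrable.mp (h1.mono_exponent hp1)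
  have hgloc : ∀ a : ℝ, IntegrableOn (fun s => Real.exp (m*s) • ψ s) (Ioc 0 a) := by
    intro a
    rcases le_or_gt a 0 with h|h
    · rw [Ioc_eq_empty (by simpa using h)]
      simp
    · apply Integrable.smul_of_top_right (hψloc a)
      apply memLp_top_of_bound hexpc.aestronglyMeasurable (Real.exp (m*a))
      filter_upwards [ae_restrict_mem measurableSet_Ioc] with x hx
      rw [Real.norm_eq_abs, abs_of_pos (Real.exp_pos _)]
      exact Real.exp_le_exp.2 (mul_le_mul_of_nonneg_left hx.2 hm.le)
  set Φ : ℝ → E := fun x => ∫ s in (0:ℝ)..x, Real.exp (m*s) • ψ s with hΦdef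
  have hφalt : ∀ a : ℝ, φ a = Real.exp (-(m*a)) • (α + Φ a) := by
    intro a
    rw [hφ a, smul_add]
    congr 1
    · rw [neg_mul]
    · rw [← intervalIntegral.integral_smul]
      apply intervalIntegral.integral_congr
      intro l _
      show Real.exp (-m * (a - l)) • ψ l = Real.exp (-(m * a)) • Real.exp (m * l) • ψ l
      rw [show (-m*(a-l)) = -(m*a) + m*l by ring, Real.exp_add, mul_smul]
  have hΦcont : ContinuousOn Φ (Ici 0) := by
    intro x hx
    have hx0 : (0:ℝ) ≤ x := hx
    have hI : IntegrableOn (fun s => Real.exp (m*s) • ψ s) (uIcc 0 (x+1)) volume := by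
      rw [uIcc_of_le (by linarith)]
      exact (integrableOn_Icc_iff_integrableOn_Ioc (by finiteness)).mpr (hgloc (x+1))
    have hc := intervalIntegral.continuousOn_primitive_interval hI
    rw [uIcc_of_le (by linarith : (0:ℝ) ≤ x + 1)] at hc
    have hcx : ContinuousWithinAt Φ (Icc 0 (x+1)) x := hc x ⟨hx0, by linarith⟩
    apply hcx.mono_of_mem_nhdsWithin
    have hmem : Ici (0:ℝ) ∩ Iio (x+1) ∈ 𝓝[Ici 0] x :=
      inter_mem_nhdsWithin _ (Iio_mem_nhds (by linarith))
    exact mem_of_superset hmem (fun y hy => ⟨hy.1, hy.2.le⟩)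
  have hφcont : ContinuousOn φ (Ici 0) := by
    have h1 : ContinuousOn (fun a => Real.exp (-(m*a)) • (α + Φ a)) (Ici 0) :=
      hexpneg.continuousOn.smul (continuousOn_const.add hΦcont)
    exact h1.congr fun a _ => hφalt a
  have hφloc : ∀ a : ℝ, 0 ≤ a → IntegrableOn φ (Ioc 0 a) := by
    intro a ha
    exact ((hφcont.mono (fun x (hx : x ∈ Icc 0 a) => hx.1)).integrableOn_Icc).mono_set
      Ioc_subset_Icc_self
  have part2 : φ 0 = α := by rw [hφ 0]; simp
  have part3 : ∀ a : ℝ, 0 ≤ a → φ a = α + ∫ l in (0:ℝ)..a, (ψ l - m • φ l) := by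
    intro a ha
    have hψa := hψloc a
    have hga := hgloc a
    have hφa := hφloc a ha
    have hΦIoc : ∀ x ∈ Ioc (0:ℝ) a, Φ x = ∫ s in Ioc (0:ℝ) x, Real.exp (m*s) • ψ s :=
      fun x hx => intervalIntegral.integral_of_le hx.1.le
    have hEα : IntegrableOn (fun l => Real.exp (-(m*l)) • α) (Ioc 0 a) :=
      Continuous.integrableOn_Ioc (hexpneg.smul continuous_const)
    have hEΦ : IntegrableOn (fun l => Real.exp (-(m*l)) • Φ l) (Ioc 0 a) := by
      have h1 : ContinuousOn (fun l => Real.exp (-(m*l)) • Φ l) (Icc 0 a) :=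
        hexpneg.continuousOn.smul (hΦcont.mono (fun x hx => hx.1))
      exact h1.integrableOn_Icc.mono_set Ioc_subset_Icc_self
    have hIφ : ∫ l in Ioc (0:ℝ) a, φ l
        = ((1 - Real.exp (-(m*a)))/m) • α + ((1/m) • (∫ s in Ioc (0:ℝ) a, ψ s)
          - (Real.exp (-(m*a))/m) • Φ a) := by
      have hstep1 : ∫ l in Ioc (0:ℝ) a, φ l
          = (∫ l in Ioc (0:ℝ) a, Real.exp (-(m*l)) • α)
            + ∫ l in Ioc (0:ℝ) a, Real.exp (-(m*l)) • Φ l := by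
        rw [← integral_add hEα hEΦ]
        apply setIntegral_congr_fun measurableSet_Ioc
        intro l _
        rw [hφalt l, smul_add]
      have hstep2 : (∫ l in Ioc (0:ℝ) a, Real.exp (-(m*l)) • α)
          = ((1 - Real.exp (-(m*a)))/m) • α := by
        rw [integral_smul_const, ← intervalIntegral.integral_of_le ha,
          exp_intervalIntegral m 0 a hm0]
        norm_num
      have hstep3 : (∫ l in Ioc (0:ℝ) a, Real.exp (-(m*l)) • Φ l)
          = (1/m) • (∫ s in Ioc (0:ℝ) a, ψ s) - (Real.exp (-(m*a))/m) • Φ a := by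
        rw [setIntegral_congr_fun measurableSet_Ioc
          (fun l hl => by rw [hΦIoc l hl] :
            ∀ l ∈ Ioc (0:ℝ) a, Real.exp (-(m*l)) • Φ l
              = Real.exp (-(m*l)) • ∫ s in Ioc (0:ℝ) l, Real.exp (m*s) • ψ s),
          fubini_triangle m a hm.le ha hga]
        have hco : ∀ s ∈ Ioc (0:ℝ) a,
            (∫ l in Ioc s a, Real.exp (-(m*l))) • (Real.exp (m*s) • ψ s)
              = (1/m) • ψ s - (Real.exp (-(m*a))/m) • (Real.exp (m*s) • ψ s) := by
          intro s hs
          rw [← intervalIntegral.integral_of_le hs.2, exp_intervalIntegral m s a hm0]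
          have hse : Real.exp (-(m*s)) * Real.exp (m*s) = 1 := by
            rw [← Real.exp_add]; simp
          match_scalars
          field_simp
          linear_combination hse
        have hint1 : IntegrableOn (fun x => (1/m : ℝ) • ψ x) (Ioc 0 a) := hψa.smul (1/m)
        have hint2' : IntegrableOn
            (fun x => (Real.exp (-(m*a))/m) • (Real.exp (m*x) • ψ x)) (Ioc 0 a) := hga.smul _
        rw [setIntegral_congr_fun measurableSet_Ioc hco,
          integral_sub hint1 hint2', integral_smul, integral_smul]
        congr 1
        rw [← intervalIntegral.integral_of_le ha]
      rw [hstep1, hstep2, hstep3]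
    have hint3 : IntegrableOn (fun x => m • φ x) (Ioc 0 a) := hφa.smul m
    rw [intervalIntegral.integral_of_le ha,
      integral_sub hψa hint3, integral_smul, hIφ, hφalt a]
    match_scalars <;> field_simp <;> ring
  have part4 : ∀ φ₂ : ℝ → E, ContinuousOn φ₂ (Set.Ici 0) →
      (∀ a : ℝ, 0 ≤ a → φ₂ a = α + ∫ l in (0:ℝ)..a, (ψ l - m • φ₂ l)) →
      ∀ a : ℝ, 0 ≤ a → φ₂ a = φ a := by
    intro φ₂ hc2 heq2 a ha
    set e : ℝ → E := fun x => φ₂ (max x 0) - φ (max x 0) with he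
    have hmax : Continuous fun x : ℝ => max x 0 := continuous_id.max continuous_const
    have hecont : Continuous e :=
      (hc2.comp_continuous hmax (fun x => le_max_right x 0)).sub
        (hφcont.comp_continuous hmax (fun x => le_max_right x 0))
    have he0 : e 0 = 0 := by
      have h1 : φ₂ 0 = α := by
        rw [heq2 0 le_rfl]; simp
      simp [he, part2, h1]
    have heeq : ∀ x : ℝ, 0 ≤ x → e x = -(m • ∫ l in (0:ℝ)..x, e l) := by
      intro x hx
      have hmaxx : max x 0 = x := max_eq_left hx
      have hint2 : IntervalIntegrable φ₂ volume 0 x := by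
        apply ContinuousOn.intervalIntegrable
        apply hc2.mono
        rw [uIcc_of_le hx]
        exact fun y hy => hy.1
      have hintφ : IntervalIntegrable φ volume 0 x := by
        apply ContinuousOn.intervalIntegrable
        apply hφcont.mono
        rw [uIcc_of_le hx]
        exact fun y hy => hy.1
      have hintψ : IntervalIntegrable ψ volume 0 x :=
        (intervalIntegrable_iff_integrableOn_Ioc_of_le hx).2 (hψloc x)
      have hcongr : ∫ l in (0:ℝ)..x, e l = ∫ l in (0:ℝ)..x, (φ₂ l - φ l) := by
        apply intervalIntegral.integral_congr
        intro l hl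
        rw [uIcc_of_le hx] at hl
        simp [he, max_eq_left hl.1]
      have hgoal : e x = φ₂ x - φ x := by rw [he]; simp [hmaxx]
      have hi2 : IntervalIntegrable (fun l => m • φ₂ l) volume 0 x := hint2.smul m
      have hiφ : IntervalIntegrable (fun l => m • φ l) volume 0 x := hintφ.smul m
      rw [hgoal, hcongr, heq2 x hx, part3 x hx,
        intervalIntegral.integral_sub hintψ hi2,
        intervalIntegral.integral_sub hintψ hiφ,
        intervalIntegral.integral_sub hint2 hintφ,
        intervalIntegral.integral_smul, intervalIntegral.integral_smul]
      module
    have heint : ∀ x : ℝ, IntervalIntegrable e volume 0 x :=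
      fun x => hecont.intervalIntegrable _ _
    have hD : ∀ x : ℝ, HasDerivAt (fun u => ∫ l in (0:ℝ)..u, e l) (e x) x := by
      intro x
      exact intervalIntegral.integral_hasDerivAt_right (heint x)
        (hecont.stronglyMeasurableAtFilter _ _) hecont.continuousAt
    have hgron : ∀ x ∈ Icc (0:ℝ) a, ‖e x‖ ≤ gronwallBound 0 m 0 (x - 0) := by
      apply norm_le_gronwallBound_of_norm_deriv_right_le (f' := fun x => -(m • e x))
      · exact hecont.continuousOn
      · intro x hx
        have h1 : HasDerivAt (fun u => -(m • ∫ l in (0:ℝ)..u, e l)) (-(m • e x)) x :=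
          ((hD x).const_smul m).neg
        apply h1.hasDerivWithinAt.congr
        · intro y hy
          exact heeq y (le_trans hx.1 hy)
        · exact heeq x hx.1
      · rw [he0]; simp
      · intro x _
        rw [norm_neg, norm_smul, Real.norm_eq_abs, abs_of_pos hm]
        simp
    have hea : ‖e a‖ ≤ 0 := by
      have := hgron a ⟨ha, le_rfl⟩
      rwa [gronwallBound_ε0, zero_mul] at this
    have hez : e a = 0 := norm_le_zero_iff.1 hea
    have : φ₂ (max a 0) - φ (max a 0) = 0 := hez
    rw [max_eq_left ha] at this
    exact sub_eq_zero.1 this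
  -- Part 1 : MemLp
  have hp0 : p ≠ 0 := by
    intro h; rw [h] at hp1; exact absurd hp1 (by simp)
  have hq1 : (1:ℝ) ≤ p.toReal := by
    rw [← ENNReal.toReal_one]
    exact ENNReal.toReal_mono hp2 hp1
  have hq0 : (0:ℝ) < p.toReal := lt_of_lt_of_le one_pos hq1
  have mem1 : MemLp (fun a => Real.exp (-(m*a)) • α) p (volume.restrict (Set.Ioi 0)) := by
    have hexp : MemLp (fun a => Real.exp (-(m*a))) p (volume.restrict (Set.Ioi 0)) := by
      refine ⟨hexpneg.aestronglyMeasurable, ?_⟩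
      rw [eLpNorm_eq_lintegral_rpow_enorm_toReal hp0 hp2]
      refine ENNReal.rpow_lt_top_of_nonneg (by positivity) ?_
      have hpt : ∀ x : ℝ, ‖Real.exp (-(m*x))‖ₑ ^ p.toReal
          = ENNReal.ofReal (Real.exp (-(p.toReal*m) * x)) := by
        intro x
        rw [Real.enorm_eq_ofReal (Real.exp_pos _).le,
          ENNReal.ofReal_rpow_of_pos (Real.exp_pos _), exp_rpow']
        congr 1
        ring
      have hint : IntegrableOn (fun x => Real.exp (-(p.toReal*m) * x)) (Ioi (0:ℝ)) :=
        exp_neg_integrableOn_Ioi 0 (by positivity)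
      have heq : (∫⁻ x in Ioi (0:ℝ), ‖Real.exp (-(m*x))‖ₑ ^ p.toReal)
          = ENNReal.ofReal (∫ x in Ioi (0:ℝ), Real.exp (-(p.toReal*m) * x)) := by
        rw [ofReal_integral_eq_lintegral_ofReal hint
          (ae_of_all _ fun x => (Real.exp_pos _).le)]
        exact lintegral_congr fun x => hpt x
      rw [heq]
      exact ENNReal.ofReal_ne_top
    exact (memLp_top_const α).smul hexp
  have mem2 : MemLp (fun a => Real.exp (-(m*a)) • Φ a) p (volume.restrict (Set.Ioi 0)) := by
    have haesm : AEStronglyMeasurable (fun a => Real.exp (-(m*a)) • Φ a)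
        (volume.restrict (Set.Ioi 0)) := by
      apply ContinuousOn.aestronglyMeasurable _ measurableSet_Ioi
      exact (hexpneg.continuousOn.smul (hΦcont.mono Ioi_subset_Ici_self))
    refine ⟨haesm, ?_⟩
    rw [eLpNorm_eq_lintegral_rpow_enorm_toReal hp0 hp2]
    set ψ' : ℝ → E := (hψ.1.mk ψ) with hψ'def
    have hψ'meas : StronglyMeasurable ψ' := hψ.1.stronglyMeasurable_mk
    have hψ'ae : ψ =ᵐ[volume.restrict (Ioi 0)] ψ' := hψ.1.ae_eq_mk
    set f : ℝ → ℝ≥0∞ := fun l => (‖ψ' l‖₊ : ℝ≥0∞) with hfdef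
    have hfmeas : Measurable f := hψ'meas.nnnorm.measurable.coe_nnreal_ennreal
    have hbound : ∀ a ∈ Ioi (0:ℝ), ((‖Real.exp (-(m*a)) • Φ a‖₊ : ℝ≥0∞)) ^ p.toReal
        ≤ (∫⁻ l in Ioc (0:ℝ) a, ENNReal.ofReal (Real.exp (-(m * (a - l)))) * f l) ^ p.toReal := by
      intro a ha
      apply ENNReal.rpow_le_rpow _ hq0.le
      have hval : Real.exp (-(m*a)) • Φ a = ∫ l in Ioc (0:ℝ) a, Real.exp (-m * (a - l)) • ψ l := by
        have h1 := hφ a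
        have h2 := hφalt a
        rw [h2, smul_add, neg_mul] at h1
        have h3 : Real.exp (-(m*a)) • Φ a = ∫ l in (0:ℝ)..a, Real.exp (-m * (a - l)) • ψ l :=
          add_left_cancel h1
        rw [h3, intervalIntegral.integral_of_le (le_of_lt ha)]
      rw [hval]
      calc ((‖∫ l in Ioc (0:ℝ) a, Real.exp (-m * (a - l)) • ψ l‖₊ : ℝ≥0∞))
          ≤ ∫⁻ l in Ioc (0:ℝ) a, (‖Real.exp (-m * (a - l)) • ψ l‖₊ : ℝ≥0∞) :=
            enorm_integral_le_lintegral_enorm _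
        _ = ∫⁻ l in Ioc (0:ℝ) a, ENNReal.ofReal (Real.exp (-(m * (a - l)))) * (‖ψ l‖₊ : ℝ≥0∞) := by
            apply lintegral_congr
            intro l
            rw [nnnorm_smul, ENNReal.coe_mul, ← enorm_eq_nnnorm, Real.enorm_eq_ofReal (Real.exp_pos _).le, neg_mul]
        _ = ∫⁻ l in Ioc (0:ℝ) a, ENNReal.ofReal (Real.exp (-(m * (a - l)))) * f l := by
            apply lintegral_congr_ae
            have hae : ψ =ᵐ[volume.restrict (Ioc (0:ℝ) a)] ψ' :=
              ae_restrict_of_ae_restrict_of_subset Ioc_subset_Ioi_self hψ'ae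
            filter_upwards [hae] with l hl
            rw [hl]
    have hfin : (∫⁻ l in Ioi (0:ℝ), f l ^ p.toReal) < ⊤ := by
      have heq2 : (∫⁻ l in Ioi (0:ℝ), f l ^ p.toReal)
          = ∫⁻ l in Ioi (0:ℝ), (‖ψ l‖₊ : ℝ≥0∞) ^ p.toReal := by
        apply lintegral_congr_ae
        filter_upwards [hψ'ae] with l hl
        rw [hl]
      rw [heq2]
      exact lintegral_rpow_enorm_lt_top_of_eLpNorm_lt_top hp0 hp2 hψ.2
    have hcalc : (∫⁻ a in Ioi (0:ℝ), ((‖Real.exp (-(m*a)) • Φ a‖₊ : ℝ≥0∞)) ^ p.toReal) < ⊤ := by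
      calc (∫⁻ a in Ioi (0:ℝ), ((‖Real.exp (-(m*a)) • Φ a‖₊ : ℝ≥0∞)) ^ p.toReal)
          ≤ ∫⁻ a in Ioi (0:ℝ),
              (∫⁻ l in Ioc (0:ℝ) a,
                ENNReal.ofReal (Real.exp (-(m * (a - l)))) * f l) ^ p.toReal := by
            apply lintegral_mono_ae
            filter_upwards [ae_restrict_mem measurableSet_Ioi] with a ha
            exact hbound a ha
        _ ≤ ENNReal.ofReal (1/m) ^ p.toReal * ∫⁻ l in Ioi (0:ℝ), f l ^ p.toReal :=
            key_bound m p.toReal hm hq1 hfmeas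
        _ < ⊤ := by
            apply ENNReal.mul_lt_top
            · exact ENNReal.rpow_lt_top_of_nonneg hq0.le ENNReal.ofReal_ne_top
            · exact hfin
    exact ENNReal.rpow_lt_top_of_nonneg (by positivity) hcalc.ne
  have part1 : MemLp φ p (volume.restrict (Set.Ioi 0)) := by
    have hsum : φ = fun a => Real.exp (-(m*a)) • α + Real.exp (-(m*a)) • Φ a :=
      funext fun a => by rw [hφalt a, smul_add]
    rw [hsum]
    exact mem1.add mem2
  exact ⟨part1, part2, part3, part4⟩


/-- Resolvent formula for the age-structure operator
`A(0,φ) = (−φ(0), −φ′)` on `X = ℝⁿ × Lᵖ((0,∞),ℝⁿ)` with `B(0,φ) = (0,φ)`.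
For `γ > 0` and `λ > −γ`, `(λI − (A − γB))^{−1}(α,ψ) = (0,φ)` with
`φ(a) = e^{−(λ+γ)a} α + ∫₀ᵃ e^{−(λ+γ)(a−l)} ψ(l) dl`: this `φ` belongs to
`W^{1,p}`-type regularity (it is in `Lᵖ`, satisfies `φ(0) = α` and the integrated
ODE `φ' + (λ+γ)φ = ψ`), and it is the unique such solution. -/
theorem age_structure_resolvent_formula
    (n : ℕ) (p : ℝ≥0∞) (hp1 : 1 ≤ p) (hp2 : p ≠ ⊤)
    (γ lam : ℝ) (hγ : 0 < γ) (hlam : -γ < lam)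
    (α : EuclideanSpace ℝ (Fin n)) (ψ : ℝ → EuclideanSpace ℝ (Fin n))
    (hψ : MemLp ψ p (volume.restrict (Set.Ioi 0)))
    (φ : ℝ → EuclideanSpace ℝ (Fin n))
    (hφ : ∀ a : ℝ, φ a = Real.exp (-(lam + γ) * a) • α
        + ∫ l in (0:ℝ)..a, Real.exp (-(lam + γ) * (a - l)) • ψ l) :
    -- φ ∈ Lᵖ((0,∞),ℝⁿ)
    MemLp φ p (volume.restrict (Set.Ioi 0)) ∧
    -- boundary value
    φ 0 = α ∧
    -- integrated form of the resolvent equation  φ′ + (λ+γ)φ = ψ,  φ(0) = α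
    (∀ a : ℝ, 0 ≤ a → φ a = α + ∫ l in (0:ℝ)..a, (ψ l - (lam + γ) • φ l)) ∧
    -- uniqueness: any continuous solution of the resolvent equation agrees with φ
    (∀ φ₂ : ℝ → EuclideanSpace ℝ (Fin n), ContinuousOn φ₂ (Set.Ici 0) →
      (∀ a : ℝ, 0 ≤ a → φ₂ a = α + ∫ l in (0:ℝ)..a, (ψ l - (lam + γ) • φ₂ l)) →
      ∀ a : ℝ, 0 ≤ a → φ₂ a = φ a) := by
  exact resolvent_general p hp1 hp2 (lam + γ) (by linarith) α ψ hψ φ hφ
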